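/- (Proposition 4.3, sufficiency) For all reals ξ, β1, β2, β3, β4, a3 with β2*(2β4 - ξ) = 0, the element r = a3 P∧M + β1 H∧M - β2 P∧H - β3 K∧M + (1/2)(β4-ξ) D∧M - (1/2)(β4+ξ) P∧K makes the coboundary cocommutator δ_r a Lie bialgebra cocommutator on S, with δ_r(K) = ξ K∧M + β1 P∧M + β2 H∧M, δ_r(H) = β3 P∧M + (β4-ξ) H∧M, δ_r(P) = β4 P∧M, δ_r(M) = 0 (so span{K,H,P,M} is an extended Galilei Lie sub-bialgebra); moreover [[r,r]] = -(1/4)(β4+ξ)^2 K∧M∧P. -/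

import Mathlib

open TensorProduct

noncomputable section

variable (L : Type) [LieRing L] [LieAlgebra ℝ L]

/-- The wedge X∧Y = X⊗Y - Y⊗X in S⊗S. -/
def wedge (X Y : L) : L ⊗[ℝ] L := X ⊗ₜ[ℝ] Y - Y ⊗ₜ[ℝ] X

/-- The adjoint action of X on S⊗S: X·r = (ad_X⊗id + id⊗ad_X)(r). -/
def act (X : L) : (L ⊗[ℝ] L) →ₗ[ℝ] (L ⊗[ℝ] L) :=
  LinearMap.rTensor L (LieAlgebra.ad ℝ L X) + LinearMap.lTensor L (LieAlgebra.ad ℝ L X)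

/-- S∧S: the span of wedges, i.e. the skew-symmetric part of S⊗S. -/
def skewPart : Submodule ℝ (L ⊗[ℝ] L) :=
  Submodule.span ℝ {w | ∃ X Y : L, w = wedge L X Y}

/-- 1-cocycle condition. -/
def IsCocycle (δ : L → L ⊗[ℝ] L) : Prop :=
  ∀ X Y : L, δ ⁅X, Y⁆ = act L X (δ Y) - act L Y (δ X)

/-- The coboundary cocommutator δ_r(X) = X·r, as a linear map. -/
def cobdry (r : L ⊗[ℝ] L) : L →ₗ[ℝ] L ⊗[ℝ] L where
  toFun X := act L X r
  map_add' X Y := by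
    have h : LieAlgebra.ad ℝ L (X + Y) = LieAlgebra.ad ℝ L X + LieAlgebra.ad ℝ L Y :=
      map_add _ _ _
    simp only [act, h, LinearMap.rTensor_add, LinearMap.lTensor_add, LinearMap.add_apply]
    abel
  map_smul' c X := by
    have h : LieAlgebra.ad ℝ L (c • X) = c • LieAlgebra.ad ℝ L X := map_smul _ _ _
    simp only [act, h, LinearMap.rTensor_smul, LinearMap.lTensor_smul, LinearMap.add_apply,
      LinearMap.smul_apply, RingHom.id_apply, smul_add]

/-- The cyclic permutation ζ : x⊗y⊗z ↦ z⊗x⊗y on (S⊗S)⊗S. -/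
def zeta : ((L ⊗[ℝ] L) ⊗[ℝ] L) →ₗ[ℝ] ((L ⊗[ℝ] L) ⊗[ℝ] L) :=
  ((TensorProduct.assoc ℝ L L L).symm.toLinearMap).comp
    ((TensorProduct.comm ℝ (L ⊗[ℝ] L) L).toLinearMap)

/-- The co-Jacobi identity for a linear map δ : S → S⊗S. -/
def CoJacobi (δ : L →ₗ[ℝ] L ⊗[ℝ] L) : Prop :=
  ∀ X : L,
    ((LinearMap.id : ((L ⊗[ℝ] L) ⊗[ℝ] L) →ₗ[ℝ] ((L ⊗[ℝ] L) ⊗[ℝ] L)) + zeta L +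
      zeta L ∘ₗ zeta L) (LinearMap.rTensor L δ (δ X)) = 0

/-- A Lie bialgebra cocommutator: skew-symmetric-valued 1-cocycle satisfying co-Jacobi. -/
def IsBialgCocomm (δ : L →ₗ[ℝ] L ⊗[ℝ] L) : Prop :=
  (∀ X : L, δ X ∈ skewPart L) ∧ IsCocycle L ⇑δ ∧ CoJacobi L δ

/-- The general 15-parameter skew-symmetric element r(a,b,c) of S⊗S. -/
def rGen (D H P K C M : L) (a1 a2 a3 a4 a5 a6 b1 b2 b3 b4 b5 b6 c1 c2 c3 : ℝ) :
    L ⊗[ℝ] L :=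
  a1 • wedge L D P + a2 • wedge L D H + a3 • wedge L P M + a4 • wedge L H M +
    a5 • wedge L P H + a6 • wedge L P C + b1 • wedge L D K + b2 • wedge L D C +
    b3 • wedge L K M + b4 • wedge L C M + b5 • wedge L K C + b6 • wedge L K H +
    c1 • wedge L D M + c2 • wedge L P K + c3 • wedge L H C

/-- The 19 Schrödinger bialgebra equations. -/
def Eqs19 (a1 a2 a3 a4 a5 a6 b1 b2 b3 b4 b5 b6 c1 c2 c3 : ℝ) : Prop :=
  a6^2 + a6*b1 - 3*a1*b5 + b5*b6 = 0 ∧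
  a2*a3 - 2*a1*a4 - a4*b6 - 3*a5*c1 + a5*c2 = 0 ∧
  a1*a2 + a2*b6 - a5*c3 = 0 ∧
  a5*b1 - a1*b6 - 2*a2*c1 - a4*c3 = 0 ∧
  a4*a6 + a4*b1 - a2*b3 - a5*b4 + a1*c1 - a1*c2 = 0 ∧
  3*a1*b2 - a2*b5 + a6*c3 + b1*c3 = 0 ∧
  a3*b2 + 2*a1*b4 - a4*b5 + a6*c1 + a6*c2 + b3*c3 = 0 ∧
  3*a2*b5 + b2*b6 - a6*c3 = 0 ∧
  b6^2 + b6*a1 - 3*b1*a5 + a5*a6 = 0 ∧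
  b2*b3 - 2*b1*b4 - b4*a6 - 3*b5*c1 - b5*c2 = 0 ∧
  b1*b2 + b2*a6 + b5*c3 = 0 ∧
  b5*a1 - b1*a6 - 2*b2*c1 + b4*c3 = 0 ∧
  b4*b6 + b4*a1 - b2*a3 - b5*a4 + b1*c1 + b1*c2 = 0 ∧
  3*b1*a2 - b2*a5 - b6*c3 - a1*c3 = 0 ∧
  b3*a2 + 2*b1*a4 - b4*a5 + b6*c1 - b6*c2 - a3*c3 = 0 ∧
  3*b2*a5 + a2*a6 + b6*c3 = 0 ∧
  4*a2*b2 + c3^2 = 0 ∧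
  2*a4*b2 + 2*a2*b4 + a5*b5 - a6*b6 = 0 ∧
  2*a1*b1 - a1*a6 - b1*b6 + a5*b5 - a6*b6 = 0

/-- Full antisymmetrization X∧Y∧Z in (S⊗S)⊗S. -/
def wedge3 (X Y Z : L) : (L ⊗[ℝ] L) ⊗[ℝ] L :=
  (X ⊗ₜ[ℝ] Y) ⊗ₜ[ℝ] Z - (X ⊗ₜ[ℝ] Z) ⊗ₜ[ℝ] Y - (Y ⊗ₜ[ℝ] X) ⊗ₜ[ℝ] Z +
    (Y ⊗ₜ[ℝ] Z) ⊗ₜ[ℝ] X + (Z ⊗ₜ[ℝ] X) ⊗ₜ[ℝ] Y - (Z ⊗ₜ[ℝ] Y) ⊗ₜ[ℝ] X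

/-- The Schouten bracket [[r,r]], written in coordinates w.r.t. a basis. -/
def schouten (B : Module.Basis (Fin 6) ℝ L) (r : L ⊗[ℝ] L) : (L ⊗[ℝ] L) ⊗[ℝ] L :=
  ∑ i : Fin 6, ∑ j : Fin 6, ∑ k : Fin 6, ∑ l : Fin 6,
    (((B.tensorProduct B).repr r (i, j)) * ((B.tensorProduct B).repr r (k, l))) •
      ((⁅B i, B k⁆ ⊗ₜ[ℝ] B j) ⊗ₜ[ℝ] B l + (B i ⊗ₜ[ℝ] ⁅B j, B k⁆) ⊗ₜ[ℝ] B l +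
        (B i ⊗ₜ[ℝ] B k) ⊗ₜ[ℝ] ⁅B j, B l⁆)

/-- The adjoint-invariant elements of S⊗S. -/
def invariants : Submodule ℝ (L ⊗[ℝ] L) where
  carrier := {η | ∀ X : L, act L X η = 0}
  add_mem' := by
    intro a b ha hb X
    simp [map_add, ha X, hb X]
  zero_mem' := by intro X; simp
  smul_mem' := by
    intro c a ha X
    simp [map_smul, ha X]

/-- The space of skew-symmetric-valued 1-cocycles on S. -/
def cocycleSpace : Submodule ℝ (L →ₗ[ℝ] (L ⊗[ℝ] L)) where
  carrier := {δ | (∀ X : L, δ X ∈ skewPart L) ∧ IsCocycle L ⇑δ}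
  add_mem' := by
    rintro a b ⟨ha1, ha2⟩ ⟨hb1, hb2⟩
    refine ⟨fun X => add_mem (ha1 X) (hb1 X), fun X Y => ?_⟩
    simp only [LinearMap.add_apply, ha2 X Y, hb2 X Y, map_add]
    abel
  zero_mem' := by
    refine ⟨fun X => zero_mem _, fun X Y => ?_⟩
    simp
  smul_mem' := by
    rintro c a ⟨ha1, ha2⟩
    refine ⟨fun X => Submodule.smul_mem _ c (ha1 X), fun X Y => ?_⟩
    simp only [LinearMap.smul_apply, ha2 X Y, map_smul, smul_sub]

end

/-! The adjoint action of `S` on `S ⊗ S` is a Lie algebra action preserving `S ∧ S`, so for skew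
`r` the coboundary `δ_r` is automatically a skew-valued 1-cocycle. The Schouten bracket does not
depend on the basis: it is the quadratic form of the bilinear pairing
`[[a ⊗ b, c ⊗ d]] = [a,c] ⊗ b ⊗ d + a ⊗ [b,c] ⊗ d + a ⊗ c ⊗ [b,d]`. What remains — `δ_r` on the
generators, co-Jacobi on the basis, and `[[r,r]]` — are finite computations with the Schrödinger
brackets; in the last two, the terms not matching the claimed values are multiples of
`β₂ (2 β₄ - ξ)`. -/

section General

variable (L : Type) [LieRing L] [LieAlgebra ℝ L]

theorem act_tmul (X a b : L) : act L X (a ⊗ₜ[ℝ] b) = ⁅X, a⁆ ⊗ₜ[ℝ] b + a ⊗ₜ[ℝ] ⁅X, b⁆ := by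
  simp [act]

theorem act_wedge (X a b : L) : act L X (wedge L a b) = wedge L ⁅X, a⁆ b + wedge L a ⁅X, b⁆ := by
  simp only [wedge, map_sub, act_tmul]
  abel

theorem act_lie (X Y : L) (w : L ⊗[ℝ] L) :
    act L ⁅X, Y⁆ w = act L X (act L Y w) - act L Y (act L X w) := by
  induction w using TensorProduct.induction_on with
  | zero => simp
  | tmul a b =>
    simp only [act_tmul, map_add, tmul_sub, sub_tmul, lie_lie]
    abel
  | add v w hv hw =>
    simp only [map_add, hv, hw]
    abel

theorem cobdry_apply (r : L ⊗[ℝ] L) (X : L) : cobdry L r X = act L X r := rfl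

theorem isCocycle_cobdry (r : L ⊗[ℝ] L) : IsCocycle L (cobdry L r) :=
  fun X Y => act_lie L X Y r

theorem wedge_mem_skewPart (a b : L) : wedge L a b ∈ skewPart L :=
  Submodule.subset_span ⟨a, b, rfl⟩

theorem act_mem_skewPart (X : L) {w : L ⊗[ℝ] L} (hw : w ∈ skewPart L) :
    act L X w ∈ skewPart L := by
  induction hw using Submodule.span_induction with
  | mem w hw =>
    obtain ⟨a, b, rfl⟩ := hw
    rw [act_wedge]
    exact add_mem (wedge_mem_skewPart L _ _) (wedge_mem_skewPart L _ _)
  | zero => simp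
  | add v w _ _ hv hw => rw [map_add]; exact add_mem hv hw
  | smul c w _ hw => rw [map_smul]; exact Submodule.smul_mem _ c hw

theorem zeta_tmul (x y z : L) : zeta L ((x ⊗ₜ[ℝ] y) ⊗ₜ[ℝ] z) = (z ⊗ₜ[ℝ] x) ⊗ₜ[ℝ] y := by
  simp [zeta]

theorem coJacobi_of_basis {ι : Type*} (b : Module.Basis ι ℝ L) (δ : L →ₗ[ℝ] L ⊗[ℝ] L)
    (h : ∀ i, ((LinearMap.id : ((L ⊗[ℝ] L) ⊗[ℝ] L) →ₗ[ℝ] _) + zeta L + zeta L ∘ₗ zeta L)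
      (LinearMap.rTensor L δ (δ (b i))) = 0) :
    CoJacobi L δ := by
  have : (LinearMap.id + zeta L + zeta L ∘ₗ zeta L) ∘ₗ LinearMap.rTensor L δ ∘ₗ δ = 0 :=
    b.ext fun i => h i
  exact fun X => LinearMap.congr_fun this X

def schoutenTerm (a b c d : L) : (L ⊗[ℝ] L) ⊗[ℝ] L :=
  (⁅a, c⁆ ⊗ₜ[ℝ] b) ⊗ₜ[ℝ] d + (a ⊗ₜ[ℝ] ⁅b, c⁆) ⊗ₜ[ℝ] d + (a ⊗ₜ[ℝ] c) ⊗ₜ[ℝ] ⁅b, d⁆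

def schoutenPairing : (L ⊗[ℝ] L) →ₗ[ℝ] (L ⊗[ℝ] L) →ₗ[ℝ] (L ⊗[ℝ] L) ⊗[ℝ] L :=
  TensorProduct.lift <| LinearMap.mk₂ ℝ
    (fun a b => TensorProduct.lift <| LinearMap.mk₂ ℝ (fun c d => schoutenTerm L a b c d)
      (by intros; simp only [schoutenTerm, lie_add, add_tmul, tmul_add]; abel)
      (by intros; simp only [schoutenTerm, lie_smul, smul_tmul', tmul_smul, smul_add])
      (by intros; simp only [schoutenTerm, lie_add, tmul_add]; abel)
      (by intros; simp only [schoutenTerm, lie_smul, smul_tmul', tmul_smul, smul_add]))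
    (by intros; ext; simp [schoutenTerm, add_lie, add_tmul]; abel)
    (by intros; ext; simp [schoutenTerm, smul_tmul', smul_add])
    (by intros; ext; simp [schoutenTerm, add_tmul, tmul_add]; abel)
    (by intros; ext; simp [schoutenTerm, smul_tmul', tmul_smul, smul_add])

theorem schoutenPairing_tmul (a b c d : L) :
    schoutenPairing L (a ⊗ₜ[ℝ] b) (c ⊗ₜ[ℝ] d) = schoutenTerm L a b c d := by
  simp [schoutenPairing]

theorem schouten_eq_schoutenPairing (B : Module.Basis (Fin 6) ℝ L) (r : L ⊗[ℝ] L) :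
    schouten L B r = schoutenPairing L r r := by
  conv_rhs => rw [← (B.tensorProduct B).sum_repr r]
  simp only [map_sum, map_smul, LinearMap.sum_apply, LinearMap.smul_apply, Finset.smul_sum,
    smul_smul]
  rw [Finset.sum_comm]
  simp only [Fintype.sum_prod_type, Module.Basis.tensorProduct_apply, schoutenPairing_tmul,
    schouten, schoutenTerm, mul_comm]

theorem isBialgCocomm_cobdry {r : L ⊗[ℝ] L} (hr : r ∈ skewPart L) (h : CoJacobi L (cobdry L r)) :
    IsBialgCocomm L (cobdry L r) :=
  ⟨fun X => act_mem_skewPart L X hr, isCocycle_cobdry L r, h⟩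

end General

section Schrodinger

variable {L : Type} [LieRing L] [LieAlgebra ℝ L]

structure SchrodingerRelations (D H P K C M : L) : Prop where
  lie_D_P : ⁅D, P⁆ = -P
  lie_D_K : ⁅D, K⁆ = K
  lie_K_P : ⁅K, P⁆ = M
  lie_D_H : ⁅D, H⁆ = (-2 : ℝ) • H
  lie_D_C : ⁅D, C⁆ = (2 : ℝ) • C
  lie_H_C : ⁅H, C⁆ = D
  lie_K_H : ⁅K, H⁆ = P
  lie_P_C : ⁅P, C⁆ = -K
  lie_K_C : ⁅K, C⁆ = 0
  lie_P_H : ⁅P, H⁆ = 0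
  lie_M : ∀ X : L, ⁅M, X⁆ = 0

variable {D H P K C M : L}

theorem SchrodingerRelations.lie_table (h : SchrodingerRelations D H P K C M) :
    ⁅D, P⁆ = -P ∧ ⁅P, D⁆ = P ∧ ⁅D, K⁆ = K ∧ ⁅K, D⁆ = -K ∧ ⁅K, P⁆ = M ∧ ⁅P, K⁆ = -M ∧
    ⁅D, H⁆ = (-2 : ℝ) • H ∧ ⁅H, D⁆ = (2 : ℝ) • H ∧ ⁅D, C⁆ = (2 : ℝ) • C ∧
    ⁅C, D⁆ = (-2 : ℝ) • C ∧ ⁅H, C⁆ = D ∧ ⁅C, H⁆ = -D ∧ ⁅K, H⁆ = P ∧ ⁅H, K⁆ = -P ∧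
    ⁅P, C⁆ = -K ∧ ⁅C, P⁆ = K ∧ ⁅K, C⁆ = 0 ∧ ⁅C, K⁆ = 0 ∧ ⁅P, H⁆ = 0 ∧ ⁅H, P⁆ = 0 ∧
    (∀ X : L, ⁅M, X⁆ = 0) ∧ ∀ X : L, ⁅X, M⁆ = 0 := by
  have swap {X Y Z : L} (e : ⁅X, Y⁆ = Z) : ⁅Y, X⁆ = -Z := by rw [← lie_skew, e]
  refine ⟨h.lie_D_P, by simpa using swap h.lie_D_P, h.lie_D_K, swap h.lie_D_K, h.lie_K_P,
    swap h.lie_K_P, h.lie_D_H, by simpa using swap h.lie_D_H, h.lie_D_C,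
    by simpa using swap h.lie_D_C, h.lie_H_C, swap h.lie_H_C, h.lie_K_H, swap h.lie_K_H,
    h.lie_P_C, by simpa using swap h.lie_P_C, h.lie_K_C, by simpa using swap h.lie_K_C,
    h.lie_P_H, by simpa using swap h.lie_P_H, h.lie_M, fun X => by simpa using swap (h.lie_M X)⟩

variable (D H P K M) (xi be1 be2 be3 be4 a3 : ℝ)

noncomputable def schrodingerR : L ⊗[ℝ] L :=
  a3 • wedge L P M + be1 • wedge L H M - be2 • wedge L P H - be3 • wedge L K M +
    ((be4 - xi) / 2) • wedge L D M - ((be4 + xi) / 2) • wedge L P K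

local notation "𝔯" => schrodingerR D H P K M xi be1 be2 be3 be4 a3

theorem schrodingerR_mem_skewPart : 𝔯 ∈ skewPart L := by
  have w := wedge_mem_skewPart L
  exact sub_mem (add_mem (sub_mem (sub_mem (add_mem ((skewPart L).smul_mem _ (w P M))
    ((skewPart L).smul_mem _ (w H M))) ((skewPart L).smul_mem _ (w P H)))
    ((skewPart L).smul_mem _ (w K M))) ((skewPart L).smul_mem _ (w D M)))
    ((skewPart L).smul_mem _ (w P K))

variable {D H P K M xi be1 be2 be3 be4 a3}

theorem SchrodingerRelations.cobdry_D (h : SchrodingerRelations D H P K C M) :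
    cobdry L 𝔯 D = (-a3) • wedge L P M + (-2 * be1) • wedge L H M + (3 * be2) • wedge L P H +
      (-be3) • wedge L K M := by
  simp only [cobdry_apply, schrodingerR, wedge, map_add, map_sub, map_smul, act_tmul,
    h.lie_table, lie_self, zero_tmul, tmul_zero, neg_tmul, tmul_neg, ← smul_tmul', tmul_smul]
  match_scalars <;> ring

theorem SchrodingerRelations.cobdry_H (h : SchrodingerRelations D H P K C M) :
    cobdry L 𝔯 H = be3 • wedge L P M + (be4 - xi) • wedge L H M := by
  simp only [cobdry_apply, schrodingerR, wedge, map_add, map_sub, map_smul, act_tmul,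
    h.lie_table, lie_self, zero_tmul, tmul_zero, neg_tmul, tmul_neg, ← smul_tmul', tmul_smul]
  match_scalars <;> ring

theorem SchrodingerRelations.cobdry_P (h : SchrodingerRelations D H P K C M) :
    cobdry L 𝔯 P = be4 • wedge L P M := by
  simp only [cobdry_apply, schrodingerR, wedge, map_add, map_sub, map_smul, act_tmul,
    h.lie_table, lie_self, zero_tmul, tmul_zero, neg_tmul, tmul_neg]
  match_scalars <;> ring

theorem SchrodingerRelations.cobdry_K (h : SchrodingerRelations D H P K C M) :
    cobdry L 𝔯 K = xi • wedge L K M + be1 • wedge L P M + be2 • wedge L H M := by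
  simp only [cobdry_apply, schrodingerR, wedge, map_add, map_sub, map_smul, act_tmul,
    h.lie_table, lie_self, zero_tmul, tmul_zero, neg_tmul, tmul_neg]
  match_scalars <;> ring

theorem SchrodingerRelations.cobdry_C (h : SchrodingerRelations D H P K C M) :
    cobdry L 𝔯 C = a3 • wedge L K M + (-be1) • wedge L D M + (-be2) • wedge L K H +
      be2 • wedge L P D + (xi - be4) • wedge L C M := by
  simp only [cobdry_apply, schrodingerR, wedge, map_add, map_sub, map_smul, act_tmul,
    h.lie_table, zero_tmul, tmul_zero, neg_tmul, tmul_neg, ← smul_tmul', tmul_smul]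
  match_scalars <;> ring

theorem SchrodingerRelations.cobdry_M (h : SchrodingerRelations D H P K C M) :
    cobdry L 𝔯 M = 0 := by
  simp only [cobdry_apply, schrodingerR, wedge, map_add, map_sub, map_smul, act_tmul,
    h.lie_table, zero_tmul, tmul_zero, sub_self, smul_zero, add_zero]

theorem SchrodingerRelations.coJacobi_cobdry (h : SchrodingerRelations D H P K C M)
    (B : Module.Basis (Fin 6) ℝ L) (hB : ⇑B = ![D, H, P, K, C, M])
    (hc : be2 * (2 * be4 - xi) = 0) : CoJacobi L (cobdry L 𝔯) := by
  apply coJacobi_of_basis L B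
  intro i
  fin_cases i <;>
    simp only [hB, Fin.zero_eta, Fin.mk_one, Fin.reduceFinMk, Matrix.cons_val,
      LinearMap.add_apply, LinearMap.id_apply, LinearMap.comp_apply, h.cobdry_D, h.cobdry_H, h.cobdry_P, h.cobdry_K, h.cobdry_C,
      h.cobdry_M, wedge, map_add, map_sub, map_smul, map_zero, LinearMap.rTensor_tmul, add_tmul,
      sub_tmul, zero_tmul, ← smul_tmul', zeta_tmul] <;>
    match_scalars <;> grind

theorem SchrodingerRelations.schoutenPairing_schrodingerR (h : SchrodingerRelations D H P K C M)
    (hc : be2 * (2 * be4 - xi) = 0) :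
    schoutenPairing L 𝔯 𝔯 = (-(1 / 4) * (be4 + xi) ^ 2) • wedge3 L K M P := by
  simp only [schrodingerR, wedge, map_add, map_sub, map_smul, LinearMap.add_apply,
    LinearMap.sub_apply, LinearMap.smul_apply, schoutenPairing_tmul, schoutenTerm, h.lie_table,
    lie_self, zero_tmul, tmul_zero, neg_tmul, tmul_neg, ← smul_tmul', tmul_smul, wedge3]
  match_scalars <;> grind

end Schrodinger

theorem statement16 (L : Type) [LieRing L] [LieAlgebra ℝ L]
    (D H P K C M : L) (B : Module.Basis (Fin 6) ℝ L)
    (hB : ⇑B = ![D, H, P, K, C, M])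
    (hDP : ⁅D, P⁆ = -P) (hDK : ⁅D, K⁆ = K) (hKP : ⁅K, P⁆ = M)
    (hDH : ⁅D, H⁆ = (-2 : ℝ) • H) (hDC : ⁅D, C⁆ = (2 : ℝ) • C) (hHC : ⁅H, C⁆ = D)
    (hKH : ⁅K, H⁆ = P) (hPC : ⁅P, C⁆ = -K) (hKC : ⁅K, C⁆ = 0) (hPH : ⁅P, H⁆ = 0)
    (hM : ∀ X : L, ⁅M, X⁆ = 0)
    (xi be1 be2 be3 be4 a3 : ℝ) (hc : be2*(2*be4 - xi) = 0)
    (r : L ⊗[ℝ] L)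
    (hr : r = a3 • wedge L P M + be1 • wedge L H M - be2 • wedge L P H -
      be3 • wedge L K M + ((be4 - xi)/2) • wedge L D M - ((be4 + xi)/2) • wedge L P K) :
    IsBialgCocomm L (cobdry L r) ∧
    cobdry L r K = xi • wedge L K M + be1 • wedge L P M + be2 • wedge L H M ∧
    cobdry L r H = be3 • wedge L P M + (be4 - xi) • wedge L H M ∧
    cobdry L r P = be4 • wedge L P M ∧
    cobdry L r M = 0 ∧
    schouten L B r = (-(1/4)*(be4 + xi)^2) • wedge3 L K M P := by
  have hS : SchrodingerRelations D H P K C M :=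
    ⟨hDP, hDK, hKP, hDH, hDC, hHC, hKH, hPC, hKC, hPH, hM⟩
  obtain rfl : r = schrodingerR D H P K M xi be1 be2 be3 be4 a3 := hr
  refine ⟨isBialgCocomm_cobdry L (schrodingerR_mem_skewPart D H P K M _ _ _ _ _ _)
      (hS.coJacobi_cobdry B hB hc), hS.cobdry_K, hS.cobdry_H, hS.cobdry_P, hS.cobdry_M, ?_⟩
  rw [schouten_eq_schoutenPairing, hS.schoutenPairing_schrodingerR hc]
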